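/- Let Q ∈ M_{M×N}(ℂ) have all entries of modulus 1 and let H = F_M ⊗_Q F_N be the deformed Fourier matrix, H_{(i,a),(j,b)} = Q_{ib} w^{ij} z^{ab} with w = e^{2πi/M}, z = e^{2πi/N}. For x ∈ ℤ/Mℤ define R^x ∈ M_{N²}(ℂ) by R^x_{ab,cd} = (1/M)·Σ_{m∈ℤ/Mℤ} w^{mx}·Q_{ma}Q_{md}·conj(Q_{mc}Q_{mb}). Then the profile matrix of H is given by Q^H_{(i,a)(j,b),(k,c)(l,d)} = δ_{a−b, c−d} · R^{i+l−k−j}_{ab,cd}, where a−b and c−d are computed in ℤ/Nℤ and i+l−k−j in ℤ/Mℤ. -/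

import Mathlib

open Matrix BigOperators ComplexConjugate

/-- The profile matrix of `H`: `Q^H_{ab,cd} = (1/n)·∑_i H_{ia}·H_{id}·conj(H_{ib}·H_{ic})`. -/
noncomputable def profile {I : Type*} [Fintype I] (H : Matrix I I ℂ) (a b c d : I) : ℂ :=
  (Fintype.card I : ℂ)⁻¹ * ∑ i, H i a * H i d * conj (H i b * H i c)

/-- The deformed Fourier matrix (Diţă deformation) `F_M ⊗_Q F_N`, with entries
`H_{(i,a),(j,b)} = Q_{ib}·w^{ij}·z^{ab}`, `w = e^{2πi/M}`, `z = e^{2πi/N}`. -/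
noncomputable def defFourier (M N : ℕ) (Q : Matrix (ZMod M) (ZMod N) ℂ) :
    Matrix (ZMod M × ZMod N) (ZMod M × ZMod N) ℂ :=
  fun p q => Q p.1 q.2 *
    Complex.exp (2 * Real.pi * Complex.I * ((p.1.val : ℂ) * (q.1.val : ℂ)) / M) *
    Complex.exp (2 * Real.pi * Complex.I * ((p.2.val : ℂ) * (q.2.val : ℂ)) / N)

/-- For `x ∈ ℤ/Mℤ`, the matrix `R^x ∈ M_{N²}(ℂ)` with entries
`R^x_{ab,cd} = (1/M)·∑_m w^{mx}·Q_{ma}·Q_{md}·conj(Q_{mc}·Q_{mb})`, `w = e^{2πi/M}`. -/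
noncomputable def Rmat (M N : ℕ) [NeZero M] (Q : Matrix (ZMod M) (ZMod N) ℂ)
    (x : ZMod M) (a b c d : ZMod N) : ℂ :=
  (M : ℂ)⁻¹ * ∑ m : ZMod M,
    Complex.exp (2 * Real.pi * Complex.I * ((m.val : ℂ) * (x.val : ℂ)) / M) *
      Q m a * Q m d * conj (Q m c * Q m b)

/-!
Write the entries of `H` through the standard characters `ψ_M`, `ψ_N` of `ℤ/Mℤ`, `ℤ/Nℤ`. Each
summand of the profile entry, indexed by the row `(m, n)`, then splits as a factor depending on `m`
times `ψ_N (n (a + d - b - c))`. Summing over `n` by character orthogonality yields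
`N · δ_{a+d, b+c}`, and the remaining sum over `m` is `M · R^{i+l-k-j}_{ab,cd}`.
-/

open Finset ZMod

lemma exp_val_mul_val_eq_stdAddChar (n : ℕ) [NeZero n] (m x : ZMod n) :
    Complex.exp (2 * Real.pi * Complex.I * ((m.val : ℂ) * (x.val : ℂ)) / n) =
      stdAddChar (m * x) := by
  have h : ((m.val * x.val : ℤ) : ZMod n) = m * x := by
    push_cast
    simp only [natCast_zmod_val]
  rw [← h, stdAddChar_coe]
  push_cast
  ring_nf

lemma sum_stdAddChar_mul (n : ℕ) [NeZero n] (x : ZMod n) :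
    ∑ m : ZMod n, stdAddChar (m * x) = if x = 0 then (n : ℂ) else 0 := by
  simpa only [ZMod.card, Nat.cast_ite, Nat.cast_zero] using AddChar.sum_mulShift x (isPrimitive_stdAddChar n)

lemma AddChar.map_add_sub_sub {G : Type*} [Finite G] [AddCommGroup G] (ψ : AddChar G ℂ)
    (s t u v : G) : ψ (s + t - u - v) = ψ s * ψ t * conj (ψ u * ψ v) := by
  rw [sub_eq_add_neg, sub_eq_add_neg, map_add_eq_mul, map_add_eq_mul, map_add_eq_mul,
    map_neg_eq_conj, map_neg_eq_conj, map_mul]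
  ring

lemma Rmat_eq_sum_stdAddChar {M N : ℕ} [NeZero M] (Q : Matrix (ZMod M) (ZMod N) ℂ)
    (x : ZMod M) (a b c d : ZMod N) :
    Rmat M N Q x a b c d =
      (M : ℂ)⁻¹ * ∑ m, stdAddChar (m * x) * Q m a * Q m d * conj (Q m c * Q m b) := by
  simp only [Rmat, exp_val_mul_val_eq_stdAddChar]

section DeformedFourier

variable {M N : ℕ} [NeZero M] [NeZero N] (Q : Matrix (ZMod M) (ZMod N) ℂ)

lemma defFourier_apply (p q : ZMod M × ZMod N) :
    defFourier M N Q p q = Q p.1 q.2 * stdAddChar (p.1 * q.1) * stdAddChar (p.2 * q.2) := by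
  simp only [defFourier, exp_val_mul_val_eq_stdAddChar]

lemma defFourier_mul_mul_conj_mul (m i j k l : ZMod M) (n a b c d : ZMod N) :
    defFourier M N Q (m, n) (i, a) * defFourier M N Q (m, n) (l, d) *
        conj (defFourier M N Q (m, n) (j, b) * defFourier M N Q (m, n) (k, c)) =
      stdAddChar (m * (i + l - k - j)) * Q m a * Q m d * conj (Q m c * Q m b) *
        stdAddChar (n * (a + d - b - c)) := by
  simp only [defFourier_apply, mul_add, mul_sub, AddChar.map_add_sub_sub, map_mul]
  ring

end DeformedFourier

theorem profile_defFourier_general (M N : ℕ) [NeZero M] [NeZero N]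
    (Q : Matrix (ZMod M) (ZMod N) ℂ)
    (i j k l : ZMod M) (a b c d : ZMod N) :
    profile (defFourier M N Q) (i, a) (j, b) (k, c) (l, d) =
      (if a - b = c - d then 1 else 0) * Rmat M N Q (i + l - k - j) a b c d := by
  have hdelta : a + d - b - c = 0 ↔ a - b = c - d := by
    constructor <;> intro h <;> linear_combination h
  have hM : (M : ℂ) ≠ 0 := NeZero.ne _
  have hN : (N : ℂ) ≠ 0 := NeZero.ne _
  rw [profile, Fintype.sum_prod_type]
  simp only [defFourier_mul_mul_conj_mul, ← sum_mul_sum, sum_stdAddChar_mul, hdelta,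
    Rmat_eq_sum_stdAddChar, Fintype.card_prod, ZMod.card]
  split_ifs
  · push_cast
    field_simp
  · simp

/-- the profile matrix of the deformed Fourier matrix `H = F_M ⊗_Q F_N` is
`Q^H_{(i,a)(j,b),(k,c)(l,d)} = δ_{a−b,c−d}·R^{i+l−k−j}_{ab,cd}`. -/
theorem profile_defFourier (M N : ℕ) [NeZero M] [NeZero N]
    (Q : Matrix (ZMod M) (ZMod N) ℂ) (hQ : ∀ i a, ‖Q i a‖ = 1)
    (i j k l : ZMod M) (a b c d : ZMod N) :
    profile (defFourier M N Q) (i, a) (j, b) (k, c) (l, d) =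
      (if a - b = c - d then 1 else 0) * Rmat M N Q (i + l - k - j) a b c d :=
  profile_defFourier_general M N Q i j k l a b c d
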